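/- Define, for each integer n, the ℂ-linear operator D_n = z^{n+1}∂_q on ℂ[z, z^{−1}], i.e., D_n(z^k) = [k]·z^{n+k} for all k ∈ ℤ. Then for all integers m and n, the relation q^m·D_m∘D_n∘τ − q^n·D_n∘D_m∘τ = [n−m]·D_{m+n} holds as an identity of linear operators on ℂ[z, z^{−1}]. -/

import Mathlib

/-!
On the basis vector `z^k` both sides are multiples of `z^(m+n+k)`, and comparing coefficients
leaves the q-integer identity `q^a [b] - q^b [a] = [b - a]` with `a = m + k`, `b = n + k`,
times the common factor `[k]`.
-/

/-- The q-integer `[m] = (q^m - q^(-m))/(q - q⁻¹)`. -/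
noncomputable def qInt (q : ℂ) (m : ℤ) : ℂ := (q ^ m - q ^ (-m)) / (q - q⁻¹)

/-- The operator `τ` on `ℂ[z,z⁻¹]`: `τ z^k = q^k·z^k`. -/
noncomputable def tau (q : ℂ) : LaurentPolynomial ℂ →ₗ[ℂ] LaurentPolynomial ℂ :=
  (AddMonoidAlgebra.coeffLinearEquiv ℂ).symm.toLinearMap ∘ₗ
    ((Finsupp.lsum ℂ fun k => q ^ k • Finsupp.lsingle k : (ℤ →₀ ℂ) →ₗ[ℂ] (ℤ →₀ ℂ))) ∘ₗ
    (AddMonoidAlgebra.coeffLinearEquiv ℂ).toLinearMap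

/-- The operator `D_n = z^{n+1}∂_q` on `ℂ[z,z⁻¹]`, i.e. the `ℂ`-linear map with
`D_n(z^k) = [k]·z^{n+k}` for all `k ∈ ℤ`. -/
noncomputable def D (q : ℂ) (n : ℤ) : LaurentPolynomial ℂ →ₗ[ℂ] LaurentPolynomial ℂ :=
  (AddMonoidAlgebra.coeffLinearEquiv ℂ).symm.toLinearMap ∘ₗ
    ((Finsupp.lsum ℂ fun k => qInt q k • Finsupp.lsingle (n + k) : (ℤ →₀ ℂ) →ₗ[ℂ] (ℤ →₀ ℂ))) ∘ₗ
    (AddMonoidAlgebra.coeffLinearEquiv ℂ).toLinearMap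

theorem D_single (q : ℂ) (n k : ℤ) (c : ℂ) :
    D q n (AddMonoidAlgebra.single k c) = AddMonoidAlgebra.single (n + k) (qInt q k * c) := by
  simp only [D, LinearMap.comp_apply, LinearEquiv.coe_coe, AddMonoidAlgebra.coeffLinearEquiv_apply,
    AddMonoidAlgebra.coeff_single, Finsupp.lsum_single, LinearMap.smul_apply, Finsupp.lsingle_apply,
    Finsupp.smul_single, smul_eq_mul, AddMonoidAlgebra.coeffLinearEquiv_symm_apply,
    AddMonoidAlgebra.ofCoeff_single]

theorem tau_single (q : ℂ) (k : ℤ) (c : ℂ) :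
    tau q (AddMonoidAlgebra.single k c) = AddMonoidAlgebra.single k (q ^ k * c) := by
  simp only [tau, LinearMap.comp_apply, LinearEquiv.coe_coe, AddMonoidAlgebra.coeffLinearEquiv_apply,
    AddMonoidAlgebra.coeff_single, Finsupp.lsum_single, LinearMap.smul_apply, Finsupp.lsingle_apply,
    Finsupp.smul_single, smul_eq_mul, AddMonoidAlgebra.coeffLinearEquiv_symm_apply,
    AddMonoidAlgebra.ofCoeff_single]

theorem zpow_mul_qInt_sub_zpow_mul_qInt {q : ℂ} (hq : q ≠ 0) (a b : ℤ) :
    q ^ a * qInt q b - q ^ b * qInt q a = qInt q (b - a) := by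
  have key : q ^ a * (q ^ b - q ^ (-b)) - q ^ b * (q ^ a - q ^ (-a))
      = q ^ (b - a) - q ^ (-(b - a)) := by
    simp only [mul_sub, ← zpow_add₀ hq]
    ring_nf
  simp only [qInt, ← key]
  ring

theorem D_bracket_general (q : ℂ) (hq : q ≠ 0) (m n : ℤ) :
    q ^ m • (D q m ∘ₗ D q n ∘ₗ tau q) - q ^ n • (D q n ∘ₗ D q m ∘ₗ tau q)
      = qInt q (n - m) • D q (m + n) := by
  refine AddMonoidAlgebra.lhom_ext' fun k => LinearMap.ext_ring ?_
  simp only [LinearMap.comp_apply, AddMonoidAlgebra.lsingle_apply, LinearMap.sub_apply,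
    LinearMap.smul_apply, tau_single, D_single, AddMonoidAlgebra.smul_single, smul_eq_mul]
  rw [add_left_comm n m k, ← add_assoc, ← AddMonoidAlgebra.single_sub]
  congr 1
  have h := zpow_mul_qInt_sub_zpow_mul_qInt hq (m + k) (n + k)
  rw [zpow_add₀ hq, zpow_add₀ hq, add_sub_add_right_eq_sub] at h
  linear_combination qInt q k * h

/-- `q^m·D_m∘D_n∘τ − q^n·D_n∘D_m∘τ = [n−m]·D_{m+n}` as an identity of linear
operators on `ℂ[z,z⁻¹]`. -/
theorem D_bracket (q : ℂ) (hq : q ≠ 0) (hq2 : q ^ 2 ≠ 1) (m n : ℤ) :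
    q ^ m • (D q m ∘ₗ D q n ∘ₗ tau q) - q ^ n • (D q n ∘ₗ D q m ∘ₗ tau q)
      = qInt q (n - m) • D q (m + n) :=
  D_bracket_general q hq m n
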